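/- Let B ⊆ P be a Hopf-Galois H-extension with B central in P. Then the formula p·h = (S⁻¹(h))^[2] p (S⁻¹(h))^[1], where T(h) = h^[1] ⊗_B h^[2] is the translation map, defines a right H-module structure on P. -/

import Mathlib

/-!
Injectivity of `can` means that an element `t` with `can t = 1 ⊗ g` is determined by `g`, so
every module axiom becomes an identity in `P ⊗[B] P` that can be checked after applying `can`.
Sandwiching by `x ⊗ y` is additive in both arguments and is the identity for `1 ⊗ 1 = can⁻¹ 1`.
Sandwiching twice, first by `t` and then by `t'`, is sandwiching by the twisted product
`twMul (t ⊗ t')`, which `can` sends to `(1 ⊗ g') * can t` whenever `can t' = 1 ⊗ g'`. Since `S⁻¹`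
reverses products, the twisted product of `T(S⁻¹h)` and `T(S⁻¹h')` is therefore `T(S⁻¹(hh'))`.
-/

open TensorProduct LinearMap Coalgebra

noncomputable section

variable (k : Type) [Field k] (H : Type) [Ring H] [HopfAlgebra k H]
-- `P` is a `k`-algebra and `B` (the coinvariants) is a commutative `k`-algebra
-- mapping centrally into `P` (`Algebra B P` encodes that `B` is central in `P`)
variable (P : Type) [Ring P] [Algebra k P]
variable (B : Type) [CommRing B] [Algebra k B] [Algebra B P] [IsScalarTower k B P]

/-- For fixed `p`, the map `x ⊗_B y ↦ y·p·x` on `P ⊗_B P`; its well-definedness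
uses that `B` is central in `P`. -/
def sandwichMap (p : P) : P ⊗[B] P →ₗ[B] P :=
  TensorProduct.lift (LinearMap.mk₂ B (fun x y => y * (p * x))
    (fun x x' y => by simp [mul_add])
    (fun b x y => by simp only [mul_smul_comm])
    (fun x y y' => by simp [add_mul])
    (fun b x y => by simp only [smul_mul_assoc]))

namespace HopfAlgebra

variable {R A : Type*} [CommSemiring R] [Semiring A] [HopfAlgebra R A] {Sinv : A →ₗ[R] A}

theorem map_one_of_comp_antipode_eq_id (h : Sinv ∘ₗ antipode R = .id) : Sinv 1 = 1 := by
  simpa using LinearMap.congr_fun h 1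

theorem map_mul_of_comp_antipode_eq_id (h₁ : Sinv ∘ₗ antipode R = .id)
    (h₂ : antipode R ∘ₗ Sinv = .id) (x y : A) : Sinv (x * y) = Sinv y * Sinv x := by
  have hS : ∀ z, antipode R (Sinv z) = z := fun z => LinearMap.congr_fun h₂ z
  have hS' : antipode R (Sinv y * Sinv x) = x * y := by rw [antipode_mul_antidistrib, hS, hS]
  rw [← hS']
  exact LinearMap.congr_fun h₁ _

end HopfAlgebra

/-- The product `(x ⊗ y) ⊗ (x' ⊗ y') ↦ x x' ⊗ y' y` of `P ⊗[B] Pᵐᵒᵖ`, written on `P ⊗[B] P`. -/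
def twMul : (P ⊗[B] P) ⊗[B] (P ⊗[B] P) →ₗ[B] P ⊗[B] P :=
  TensorProduct.map (LinearMap.mul' B P)
      (LinearMap.mul' B P ∘ₗ (TensorProduct.comm B P P).toLinearMap)
    ∘ₗ (TensorProduct.tensorTensorTensorComm B P P P P).toLinearMap

theorem twMul_tmul (x y x' y' : P) :
    twMul P B ((x ⊗ₜ[B] y) ⊗ₜ[B] (x' ⊗ₜ[B] y')) = (x * x') ⊗ₜ[B] (y' * y) := by
  simp [twMul]

theorem sandwichMap_tmul (p x y : P) : sandwichMap P B p (x ⊗ₜ[B] y) = y * (p * x) := rfl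

theorem sandwichMap_one_tmul_one (p : P) : sandwichMap P B p (1 ⊗ₜ[B] 1) = p := by
  rw [sandwichMap_tmul, one_mul, mul_one]

theorem sandwichMap_add_left (p p' : P) (t : P ⊗[B] P) :
    sandwichMap P B (p + p') t = sandwichMap P B p t + sandwichMap P B p' t := by
  induction t using TensorProduct.induction_on with
  | zero => simp
  | tmul x y => simp [sandwichMap_tmul, mul_add, add_mul]
  | add t₁ t₂ h₁ h₂ => rw [map_add, map_add, map_add, h₁, h₂]; abel

theorem sandwichMap_sandwichMap (p : P) (t t' : P ⊗[B] P) :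
    sandwichMap P B (sandwichMap P B p t) t' = sandwichMap P B p (twMul P B (t ⊗ₜ[B] t')) := by
  induction t' using TensorProduct.induction_on with
  | zero => simp
  | tmul x' y' =>
    induction t using TensorProduct.induction_on with
    | zero => simp [sandwichMap_tmul]
    | tmul x y => simp [twMul_tmul, sandwichMap_tmul, mul_assoc]
    | add t₁ t₂ h₁ h₂ => rw [map_add, sandwichMap_add_left, h₁, h₂, add_tmul, map_add, map_add]
  | add t₁ t₂ h₁ h₂ => rw [map_add, h₁, h₂, tmul_add, map_add, map_add]

section Canonical

variable {R A : Type*} [CommSemiring R] [Semiring A] [Algebra R A]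
  [Algebra R P] [SMulCommClass R B P]
  {ρ : P →ₐ[R] P ⊗[R] A} {can : P ⊗[B] P →ₗ[B] P ⊗[R] A}

theorem can_one_tmul_one (hcan : ∀ p p' : P, can (p ⊗ₜ[B] p') = (p ⊗ₜ[R] (1 : A)) * ρ p') :
    can ((1 : P) ⊗ₜ[B] (1 : P)) = 1 := by
  rw [hcan, map_one, ← Algebra.TensorProduct.one_def, one_mul]

theorem can_twMul_tmul_left
    (hcan : ∀ p p' : P, can (p ⊗ₜ[B] p') = (p ⊗ₜ[R] (1 : A)) * ρ p') (x y : P) (t : P ⊗[B] P) :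
    can (twMul P B ((x ⊗ₜ[B] y) ⊗ₜ[B] t)) = (x ⊗ₜ[R] (1 : A)) * can t * ρ y := by
  induction t using TensorProduct.induction_on with
  | zero => simp
  | tmul x' y' =>
    rw [twMul_tmul, hcan, hcan, map_mul, ← one_mul (1 : A), ← Algebra.TensorProduct.tmul_mul_tmul]
    simp only [mul_assoc, one_mul]
  | add t₁ t₂ h₁ h₂ => rw [tmul_add, map_add, map_add, h₁, h₂, map_add, mul_add, add_mul]

theorem can_twMul_of_can_eq_one_tmul
    (hcan : ∀ p p' : P, can (p ⊗ₜ[B] p') = (p ⊗ₜ[R] (1 : A)) * ρ p')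
    {g' : A} {t' : P ⊗[B] P} (ht' : can t' = (1 : P) ⊗ₜ[R] g') (t : P ⊗[B] P) :
    can (twMul P B (t ⊗ₜ[B] t')) = ((1 : P) ⊗ₜ[R] g') * can t := by
  induction t using TensorProduct.induction_on with
  | zero => simp
  | tmul x y =>
    have hcomm : (x ⊗ₜ[R] (1 : A)) * ((1 : P) ⊗ₜ[R] g') = ((1 : P) ⊗ₜ[R] g') * (x ⊗ₜ[R] 1) := by
      simp [Algebra.TensorProduct.tmul_mul_tmul]
    rw [can_twMul_tmul_left P B hcan, ht', hcomm, hcan, mul_assoc]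
  | add t₁ t₂ h₁ h₂ => rw [add_tmul, map_add, map_add, h₁, h₂, map_add, mul_add]

end Canonical

theorem statement11
    (Sinv : H →ₗ[k] H)
    (hSinv1 : Sinv ∘ₗ HopfAlgebra.antipode (R := k) = LinearMap.id)
    (hSinv2 : HopfAlgebra.antipode (R := k) ∘ₗ Sinv = LinearMap.id)
    -- `ρ` makes `P` a right `H`-comodule algebra
    (ρ : P →ₐ[k] P ⊗[k] H)
    -- the extension `B ⊆ P` is Hopf-Galois: the canonical map is bijective
    (can : P ⊗[B] P →ₗ[B] P ⊗[k] H)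
    (hcan : ∀ p p' : P, can (p ⊗ₜ[B] p') = (p ⊗ₜ[k] (1 : H)) * ρ p')
    (hbij : Function.Bijective can) :
    -- `p·h := (S⁻¹h)⁽²⁾ p (S⁻¹h)⁽¹⁾` (with `T(S⁻¹h) = can⁻¹(1 ⊗ S⁻¹h)`)
    -- defines a right `H`-module structure on `P`:
    -- (additivity in `p`)
    (∀ (p p' : P) (h : H) (t : P ⊗[B] P), can t = (1 : P) ⊗ₜ[k] Sinv h →
      sandwichMap P B (p + p') t = sandwichMap P B p t + sandwichMap P B p' t) ∧
    -- (additivity in `h`)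
    (∀ (p : P) (h h' : H) (t t' t'' : P ⊗[B] P),
      can t = (1 : P) ⊗ₜ[k] Sinv h → can t' = (1 : P) ⊗ₜ[k] Sinv h' →
      can t'' = (1 : P) ⊗ₜ[k] Sinv (h + h') →
      sandwichMap P B p t'' = sandwichMap P B p t + sandwichMap P B p t') ∧
    -- (unitality: `p·1 = p`)
    (∀ (p : P) (t : P ⊗[B] P), can t = (1 : P) ⊗ₜ[k] Sinv 1 →
      sandwichMap P B p t = p) ∧
    -- (associativity: `(p·h)·h' = p·(hh')`)
    (∀ (p : P) (h h' : H) (t t' t'' : P ⊗[B] P),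
      can t = (1 : P) ⊗ₜ[k] Sinv h → can t' = (1 : P) ⊗ₜ[k] Sinv h' →
      can t'' = (1 : P) ⊗ₜ[k] Sinv (h * h') →
      sandwichMap P B (sandwichMap P B p t) t' = sandwichMap P B p t'') := by
  refine ⟨fun p p' _ t _ => sandwichMap_add_left P B p p' t, ?_, ?_, ?_⟩
  · intro p h h' t t' t'' ht ht' ht''
    obtain rfl : t'' = t + t' :=
      hbij.injective (by rw [ht'', map_add, tmul_add, map_add, ht, ht'])
    exact map_add _ t t'
  · intro p t ht
    obtain rfl : t = 1 ⊗ₜ[B] 1 := hbij.injective (by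
      rw [ht, HopfAlgebra.map_one_of_comp_antipode_eq_id hSinv1, can_one_tmul_one P B hcan,
        Algebra.TensorProduct.one_def])
    exact sandwichMap_one_tmul_one P B p
  · intro p h h' t t' t'' ht ht' ht''
    obtain rfl : t'' = twMul P B (t ⊗ₜ[B] t') := hbij.injective (by
      rw [ht'', can_twMul_of_can_eq_one_tmul P B hcan ht' t, ht,
        Algebra.TensorProduct.tmul_mul_tmul, one_mul,
        HopfAlgebra.map_mul_of_comp_antipode_eq_id hSinv1 hSinv2])
    exact sandwichMap_sandwichMap P B p t t'
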